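/- Let O be a point of the Euclidean plane EuclideanSpace ℝ (Fin 2), r > 0, let S be a finite set contained in the closed ball of radius r centered at O, and let B = S ∩ sphere O r be the points of S on the boundary. If O lies in the convex hull of B, then for every point c there exists p ∈ B with dist c p ≥ r; in particular no closed ball of radius strictly less than r contains S, so the smallest enclosing circle of S is the circle of center O and radius r. -/

import Mathlib

/-! Since `O` lies in the convex hull of the boundary points, the linear functional `⟪c - O, ·⟫`
cannot exceed its value at `O` on all of them: some boundary point `p` has
`⟪c - O, p - O⟫ ≤ 0`. The angle of the triangle `c O p` at `O` is then not acute, so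
`dist c p ≥ dist O p = r`. -/

open Metric Set
open scoped RealInnerProductSpace

section InnerProductSpace

variable {E : Type*} [NormedAddCommGroup E] [InnerProductSpace ℝ E]

theorem exists_inner_le_of_mem_convexHull {s : Set E} {x : E} (hx : x ∈ convexHull ℝ s) (v : E) :
    ∃ p ∈ s, ⟪v, p⟫ ≤ ⟪v, x⟫ :=
  ((innerₛₗ ℝ v).concaveOn convex_univ).exists_le_of_mem_convexHull (subset_univ s) hx

theorem dist_le_dist_of_inner_sub_nonpos {O c p : E} (h : ⟪c - O, p - O⟫ ≤ 0) :
    dist O p ≤ dist c p := by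
  have hsq : dist c p ^ 2 = ‖c - O‖ ^ 2 - 2 * ⟪c - O, p - O⟫ + dist O p ^ 2 := by
    rw [dist_eq_norm, dist_comm, dist_eq_norm, ← norm_sub_sq_real, sub_sub_sub_cancel_right]
  refine (pow_le_pow_iff_left₀ dist_nonneg dist_nonneg two_ne_zero).mp ?_
  nlinarith [sq_nonneg ‖c - O‖]

theorem exists_radius_le_dist_of_center_mem_convexHull {O : E} {r : ℝ} {s : Set E}
    (hs : s ⊆ sphere O r) (hO : O ∈ convexHull ℝ s) (c : E) : ∃ p ∈ s, r ≤ dist c p := by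
  obtain ⟨p, hp, hle⟩ := exists_inner_le_of_mem_convexHull hO (c - O)
  refine ⟨p, hp, ?_⟩
  rw [← mem_sphere'.mp (hs hp)]
  exact dist_le_dist_of_inner_sub_nonpos (by rwa [inner_sub_right, sub_nonpos])

end InnerProductSpace

theorem sec_invariant_of_fixed_boundary_general
    (O : EuclideanSpace ℝ (Fin 2)) (r : ℝ)
    (S : Set (EuclideanSpace ℝ (Fin 2)))
    (hO : O ∈ convexHull ℝ (S ∩ sphere O r)) :
    (∀ c : EuclideanSpace ℝ (Fin 2), ∃ p ∈ S ∩ sphere O r, r ≤ dist c p) ∧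
    (∀ (c : EuclideanSpace ℝ (Fin 2)) (ρ : ℝ), ρ < r → ¬ S ⊆ closedBall c ρ) := by
  have far_point := exists_radius_le_dist_of_center_mem_convexHull inter_subset_right hO
  refine ⟨far_point, fun c ρ hρ hS => ?_⟩
  obtain ⟨p, hp, hrp⟩ := far_point c
  have hpc : dist p c ≤ ρ := hS hp.1
  rw [dist_comm] at hpc
  linarith

theorem sec_invariant_of_fixed_boundary
    (O : EuclideanSpace ℝ (Fin 2)) (r : ℝ) (hr : 0 < r)
    (S : Set (EuclideanSpace ℝ (Fin 2))) (hfin : S.Finite)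
    (hS : S ⊆ closedBall O r)
    (hO : O ∈ convexHull ℝ (S ∩ sphere O r)) :
    (∀ c : EuclideanSpace ℝ (Fin 2), ∃ p ∈ S ∩ sphere O r, r ≤ dist c p) ∧
    (∀ (c : EuclideanSpace ℝ (Fin 2)) (ρ : ℝ), ρ < r → ¬ S ⊆ closedBall c ρ) :=
  sec_invariant_of_fixed_boundary_general O r S hO
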